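/- If a weighted undirected graph G on n vertices with nonnegative loop weights has at least two edges (counting loops) with nonzero weight that are not the same edge, then ρ(G) = L(G)/tr(L(G)) is a mixed state, i.e., ρ(G)² ≠ ρ(G). -/

import Mathlib

/-! A pure state has `tr ρ² = (tr ρ)²`, i.e. `tr L² = (tr L)²`. Every entry of `L` is bounded in
absolute value by the diagonal entry of its row, so `tr L² = ∑ L i j * L j i ≤ ∑ L i i * L j j`
`= (tr L)²`, and equality forces `L i j * L j i = L i i * L j j` for all `i, j`. For two vertices
`p ≠ q` of positive degree this gives `|a p q| = L p p = ∑ j, |a p j| + a p p`, which leaves no room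
for a loop at `p` nor for a third vertex of positive degree. Hence all nonzero weights sit on a
single edge. -/

open Finset

namespace Matrix

variable {ι : Type*} [Fintype ι]

theorem trace_mul_self_eq_sq_of_inv_trace_smul_idempotent {K : Type*} [Field K]
    {L : Matrix ι ι K} (ht : L.trace ≠ 0)
    (h : (L.trace⁻¹ • L) * (L.trace⁻¹ • L) = L.trace⁻¹ • L) :
    (L * L).trace = L.trace ^ 2 := by
  have htr := congrArg trace h
  rw [smul_mul_smul_comm, trace_smul, trace_smul, smul_eq_mul, smul_eq_mul,
    inv_mul_cancel₀ ht] at htr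
  field_simp at htr
  linear_combination htr

theorem apply_mul_apply_eq_of_trace_mul_self_eq_sq {M : Matrix ι ι ℝ}
    (hM : ∀ i j, |M i j| ≤ M i i) (h : (M * M).trace = M.trace ^ 2) (i j : ι) :
    M i j * M j i = M i i * M j j := by
  have hle : ∀ p : ι × ι, M p.1 p.2 * M p.2 p.1 ≤ M p.1 p.1 * M p.2 p.2 := fun ⟨i, j⟩ =>
    calc M i j * M j i ≤ |M i j| * |M j i| := by rw [← abs_mul]; exact le_abs_self _
      _ ≤ M i i * M j j :=
        mul_le_mul (hM i j) (hM j i) (abs_nonneg _) ((abs_nonneg _).trans (hM i j))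
  have hsum :
      ∑ p : ι × ι, M p.1 p.2 * M p.2 p.1 = ∑ p : ι × ι, M p.1 p.1 * M p.2 p.2 := by
    simp only [Fintype.sum_prod_type]
    rw [← sum_mul_sum, ← sq]
    simpa [trace, mul_apply] using h
  exact (sum_eq_sum_iff_of_le fun p _ => hle p).mp hsum (i, j) (mem_univ _)

end Matrix

theorem eq_abs_of_mul_self_eq_mul {a b x : ℝ} (hb : 0 < b) (hxa : |x| ≤ a) (hxb : |x| ≤ b)
    (h : x * x = a * b) : a = |x| := by
  have : a * b ≤ |x| * b := by
    rw [← h, ← abs_mul_abs_self]; exact mul_le_mul_of_nonneg_left hxb (abs_nonneg x)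
  exact le_antisymm (le_of_mul_le_mul_right this hb) hxa

variable {ι : Type*} [Fintype ι] [DecidableEq ι]

def signlessLaplacian (A : Matrix ι ι ℝ) : Matrix ι ι ℝ :=
  Matrix.diagonal (fun i => ∑ j, |A i j|) + A

namespace signlessLaplacian

variable {A : Matrix ι ι ℝ}

theorem apply_self (i : ι) : signlessLaplacian A i i = ∑ j, |A i j| + A i i := by
  simp [signlessLaplacian]

theorem apply_of_ne {i j : ι} (h : i ≠ j) : signlessLaplacian A i j = A i j := by
  simp [signlessLaplacian, Matrix.diagonal_apply_ne _ h]

theorem abs_add_abs_add_le {i a b : ι} (hab : a ≠ b) :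
    |A i a| + |A i b| + A i i ≤ signlessLaplacian A i i := by
  rw [apply_self]
  gcongr
  exact add_le_sum (f := fun k => |A i k|) (fun _ _ => abs_nonneg _) (mem_univ a) (mem_univ b)
    hab

theorem abs_le_apply_self (hloops : ∀ i, 0 ≤ A i i) (i j : ι) :
    |A i j| ≤ signlessLaplacian A i i := by
  rw [apply_self]
  have := single_le_sum (fun k _ => abs_nonneg (A i k)) (mem_univ j)
  linarith [hloops i]

theorem apply_self_pos (hloops : ∀ i, 0 ≤ A i i) {i j : ι} (h : A i j ≠ 0) :
    0 < signlessLaplacian A i i :=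
  (abs_pos.mpr h).trans_le (abs_le_apply_self hloops i j)

theorem abs_apply_le_apply_self (hloops : ∀ i, 0 ≤ A i i) (i j : ι) :
    |signlessLaplacian A i j| ≤ signlessLaplacian A i i := by
  obtain rfl | hij := eq_or_ne i j
  · exact (abs_of_nonneg ((abs_nonneg _).trans (abs_le_apply_self hloops i i))).le
  · rw [apply_of_ne hij]; exact abs_le_apply_self hloops i j

theorem trace_pos (hloops : ∀ i, 0 ≤ A i i) {i j : ι} (h : A i j ≠ 0) :
    0 < (signlessLaplacian A).trace :=
  (apply_self_pos hloops h).trans_le <| single_le_sum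
    (fun k _ => (abs_nonneg _).trans (abs_apply_le_apply_self hloops k k)) (mem_univ i)

theorem abs_apply_eq_apply_self_of_pure (hloops : ∀ i, 0 ≤ A i i) (hA : A.IsSymm)
    (hpure : (signlessLaplacian A * signlessLaplacian A).trace = (signlessLaplacian A).trace ^ 2)
    {p q : ι} (hpq : p ≠ q) (hq : 0 < signlessLaplacian A q q) :
    |A p q| = signlessLaplacian A p p := by
  have h := Matrix.apply_mul_apply_eq_of_trace_mul_self_eq_sq
    (abs_apply_le_apply_self hloops) hpure p q
  rw [apply_of_ne hpq, apply_of_ne hpq.symm, hA.apply p q] at h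
  refine (eq_abs_of_mul_self_eq_mul hq (abs_le_apply_self hloops p q) ?_ h).symm
  rw [← hA.apply p q]; exact abs_le_apply_self hloops q p

theorem apply_self_eq_zero_of_pure (hloops : ∀ i, 0 ≤ A i i) (hA : A.IsSymm)
    (hpure : (signlessLaplacian A * signlessLaplacian A).trace = (signlessLaplacian A).trace ^ 2)
    {p q : ι} (hpq : p ≠ q) (hq : 0 < signlessLaplacian A q q) : A p p = 0 := by
  have := abs_add_abs_add_le (A := A) (i := p) hpq
  rw [abs_of_nonneg (hloops p), abs_apply_eq_apply_self_of_pure hloops hA hpure hpq hq] at this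
  linarith [hloops p]

theorem eq_or_eq_of_pure (hloops : ∀ i, 0 ≤ A i i) (hA : A.IsSymm)
    (hpure : (signlessLaplacian A * signlessLaplacian A).trace = (signlessLaplacian A).trace ^ 2)
    {p q r : ι} (hpq : p ≠ q) (hp : 0 < signlessLaplacian A p p)
    (hq : 0 < signlessLaplacian A q q) (hr : 0 < signlessLaplacian A r r) : r = p ∨ r = q := by
  by_contra! h
  have := abs_add_abs_add_le (A := A) (i := p) (Ne.symm h.2)
  rw [abs_apply_eq_apply_self_of_pure hloops hA hpure hpq hq,
    abs_apply_eq_apply_self_of_pure hloops hA hpure (Ne.symm h.1) hr] at this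
  linarith [hloops p]

theorem sym2_eq_of_pure (hloops : ∀ i, 0 ≤ A i i) (hA : A.IsSymm)
    (hpure : (signlessLaplacian A * signlessLaplacian A).trace = (signlessLaplacian A).trace ^ 2)
    {i j k l : ι} (hij : A i j ≠ 0) (hkl : A k l ≠ 0) :
    s(i, j) = s(k, l) := by
  have pos {a b} (h : A a b ≠ 0) : 0 < signlessLaplacian A a a ∧ 0 < signlessLaplacian A b b :=
    ⟨apply_self_pos hloops h, apply_self_pos hloops (hA.apply a b ▸ h)⟩
  obtain ⟨hi, hj⟩ := pos hij
  obtain ⟨hk, hl⟩ := pos hkl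
  obtain rfl | hne := eq_or_ne i j
  · have only_i {r} (hr : 0 < signlessLaplacian A r r) : r = i := by
      by_contra h
      exact hij (apply_self_eq_zero_of_pure hloops hA hpure (Ne.symm h) hr)
    rw [only_i hk, only_i hl]
  · have hk' := eq_or_eq_of_pure hloops hA hpure hne hi hj hk
    have hl' := eq_or_eq_of_pure hloops hA hpure hne hi hj hl
    have hii := apply_self_eq_zero_of_pure hloops hA hpure hne hj
    have hjj := apply_self_eq_zero_of_pure hloops hA hpure hne.symm hi
    rcases hk' with rfl | rfl <;> rcases hl' with rfl | rfl <;> simp_all [Sym2.eq_swap]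

end signlessLaplacian

/-- If a weighted undirected graph on n vertices with nonnegative loop
weights has at least two distinct edges (counting loops) of nonzero weight, then its
normalized signless Laplacian ρ(G) satisfies ρ(G)² ≠ ρ(G), i.e., it is a mixed state. -/
theorem stmt3 (n : ℕ) (A D L ρ : Matrix (Fin n) (Fin n) ℝ)
    (hA : A.IsSymm) (hloops : ∀ i, 0 ≤ A i i)
    (i₁ j₁ i₂ j₂ : Fin n)
    (h₁ : A i₁ j₁ ≠ 0) (h₂ : A i₂ j₂ ≠ 0)
    (hdistinct : ¬ ((i₁ = i₂ ∧ j₁ = j₂) ∨ (i₁ = j₂ ∧ j₁ = i₂)))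
    (hD : D = Matrix.diagonal (fun i => ∑ j, |A i j|))
    (hL : L = D + A)
    (hρ : ρ = (L.trace)⁻¹ • L) :
    ρ * ρ ≠ ρ := by
  intro hidem
  obtain rfl : L = signlessLaplacian A := by rw [hL, hD]; rfl
  subst hρ
  have hpure := Matrix.trace_mul_self_eq_sq_of_inv_trace_smul_idempotent
    (signlessLaplacian.trace_pos hloops h₁).ne' hidem
  exact hdistinct (Sym2.eq_iff.mp (signlessLaplacian.sym2_eq_of_pure hloops hA hpure h₁ h₂))
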